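/- arXiv:math/0701222 — 7 statements merged into one kernel-verified Lean document; each statement's English description precedes it below -/
import Mathlib

section
/- Let a, b ∈ ℝ³. Then a⊗b is projectively equivalent to −a or to −b if and only if a and b are not transversal, i.e., if and only if aᵢ−bᵢ = aⱼ−bⱼ for some pair of indices i ≠ j. (Equivalently: interior points a, b of the tropical projective plane are transversal if and only if a⊗b ∉ {−a, −b} up to projective equivalence.) -/
/-- Projective equivalence in the tropical projective plane:
`y = x + λ·(1,1,1)` for some real `λ`. -/
def PEquiv3 (x y : Fin 3 → ℝ) : Prop := ∃ l : ℝ, y = fun i => x i + l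

/-- Tropical cross product of two points of `ℝ³`. -/
def tcross (a b : Fin 3 → ℝ) : Fin 3 → ℝ :=
  ![max (a 1 + b 2) (b 1 + a 2), max (a 0 + b 2) (b 0 + a 2), max (a 0 + b 1) (b 0 + a 1)]

/-- Two points of `ℝ³` are transversal if the three coordinate differences
are pairwise distinct. -/
def Transversal3 (a b : Fin 3 → ℝ) : Prop :=
  a 0 - b 0 ≠ a 1 - b 1 ∧ a 0 - b 0 ≠ a 2 - b 2 ∧ a 1 - b 1 ≠ a 2 - b 2

/-- Three points of `ℝ³` are tropically collinear if some tropical line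
(with coefficient vector `u`) contains all three. -/
def TropCollinear (a b c : Fin 3 → ℝ) : Prop :=
  ∃ u : Fin 3 → ℝ, ∀ p ∈ ({a, b, c} : Set (Fin 3 → ℝ)),
    ∃ i j : Fin 3, i ≠ j ∧ u i + p i = u j + p j ∧ ∀ k, u k + p k ≤ u i + p i

/-- `a, b, c` form a transversal tropical triangle: vertices pairwise transversal
and the cross products (sides) pairwise transversal. -/
def TransTriangle (a b c : Fin 3 → ℝ) : Prop :=
  Transversal3 a b ∧ Transversal3 b c ∧ Transversal3 c a ∧
  Transversal3 (tcross a b) (tcross b c) ∧ Transversal3 (tcross b c) (tcross c a) ∧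
  Transversal3 (tcross c a) (tcross a b)

/-- The embedding of the affine chart `Z = 0` into the tropical projective plane. -/
def jhat (x : Fin 2 → ℝ) : Fin 3 → ℝ := ![x 0, x 1, 0]

/-- `u` is tropically spanned by the points `p 0, …, p (s-1)`: `u` is projectively
equivalent to a componentwise maximum of finitely many translates of the `p j`,
over a nonempty subset of indices (terms with coefficient `-∞` are omitted). -/
def TropSpanned {s : ℕ} (u : Fin 3 → ℝ) (p : Fin s → Fin 3 → ℝ) : Prop :=
  ∃ S : Finset (Fin s), ∃ hS : S.Nonempty, ∃ lam : Fin s → ℝ,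
    PEquiv3 u (fun i => S.sup' hS (fun j => lam j + p j i))

/-- The tropical determinant (permanent) of a 3×3 real matrix. -/
noncomputable def tropDet (A : Fin 3 → Fin 3 → ℝ) : ℝ :=
  Finset.univ.sup' Finset.univ_nonempty (fun σ : Equiv.Perm (Fin 3) => ∑ i, A i (σ i))

/-- A 3×3 real matrix is tropically regular if the maximum in its tropical
determinant is attained by exactly one permutation. -/
def TropRegular (A : Fin 3 → Fin 3 → ℝ) : Prop :=
  ∃! σ : Equiv.Perm (Fin 3), ∑ i, A i (σ i) = tropDet A

/-- The six inequalities of Theorem 1 (affine version). -/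
def SixIneqs (a b c : Fin 2 → ℝ) : Prop :=
  a 0 < b 0 ∧ b 0 < c 0 ∧ a 1 < c 1 ∧ c 1 < b 1 ∧
  b 0 - b 1 < a 0 - a 1 ∧ a 0 - a 1 < c 0 - c 1

/-- The six inequalities of Theorem 2 (projective version). -/
def ProjSixIneqs (a b c : Fin 3 → ℝ) : Prop :=
  b 0 - b 1 < a 0 - a 1 ∧ a 0 - a 1 < c 0 - c 1 ∧
  a 1 - a 2 < c 1 - c 2 ∧ c 1 - c 2 < b 1 - b 2 ∧
  c 2 - c 0 < b 2 - b 0 ∧ b 2 - b 0 < a 2 - a 0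

lemma pequiv_neg_iff (c a : Fin 3 → ℝ) :
    PEquiv3 c (-a) ↔ (c 0 + a 0 = c 1 + a 1 ∧ c 0 + a 0 = c 2 + a 2) := by
  constructor
  · rintro ⟨l, h⟩
    have h0 := congrFun h 0
    have h1 := congrFun h 1
    have h2 := congrFun h 2
    simp only [Pi.neg_apply] at h0 h1 h2
    constructor <;> linarith
  · rintro ⟨h1, h2⟩
    exact ⟨-(c 0 + a 0), by funext i; fin_cases i <;> simp <;> linarith⟩

/-- `a⊗b` is projectively equivalent to `−a` or `−b`
iff `a` and `b` are not transversal. -/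
theorem cross_in_neg_iff_not_transversal (a b : Fin 3 → ℝ) :
    (PEquiv3 (tcross a b) (-a) ∨ PEquiv3 (tcross a b) (-b)) ↔ ¬ Transversal3 a b := by
  have e0 : tcross a b 0 = max (a 1 + b 2) (b 1 + a 2) := rfl
  have e1 : tcross a b 1 = max (a 0 + b 2) (b 0 + a 2) := rfl
  have e2 : tcross a b 2 = max (a 0 + b 1) (b 0 + a 1) := rfl
  rw [pequiv_neg_iff, pequiv_neg_iff, e0, e1, e2]
  unfold Transversal3
  simp only [not_and_or, not_not, ne_eq]
  rcases le_total (a 1 + b 2) (b 1 + a 2) with h01 | h01 <;>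
  rcases le_total (a 0 + b 2) (b 0 + a 2) with h02 | h02 <;>
  rcases le_total (a 0 + b 1) (b 0 + a 1) with h03 | h03 <;>
  [skip; skip; skip; skip; skip; skip; skip; skip] <;>
  · first | rw [max_eq_right h01] | rw [max_eq_left h01]
    first | rw [max_eq_right h02] | rw [max_eq_left h02]
    first | rw [max_eq_right h03] | rw [max_eq_left h03]
    constructor
    · rintro (⟨p, q⟩ | ⟨p, q⟩) <;>
        first
          | exact Or.inl (by linarith)
          | exact Or.inr (Or.inl (by linarith))
          | exact Or.inr (Or.inr (by linarith))
    · rintro (h | h | h) <;>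
        first
          | exact Or.inl ⟨by linarith, by linarith⟩
          | exact Or.inr ⟨by linarith, by linarith⟩
end

section
/- Let a, b, c ∈ ℝ³ be pairwise projectively inequivalent and tropically non-collinear. Assume that a and b are transversal, a and c are transversal, and the cross products a⊗b and c⊗a are transversal (i.e., the tropical sides ab and ca are transversal lines). Then (c⊗a) ⊗ (a⊗b) is projectively equivalent to a; that is, the stable intersection of the tropical lines ca and ab is the point a. -/
set_option maxHeartbeats 1600000 in
/-- under the transversality assumptions, the stable intersection
of the sides `ca` and `ab` is the point `a`. -/
theorem stable_intersection_of_sides (a b c : Fin 3 → ℝ)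
    (hab : ¬ PEquiv3 a b) (hbc : ¬ PEquiv3 b c) (hac : ¬ PEquiv3 a c)
    (hcol : ¬ TropCollinear a b c)
    (htab : Transversal3 a b) (htac : Transversal3 a c)
    (hsides : Transversal3 (tcross a b) (tcross c a)) :
    PEquiv3 (tcross (tcross c a) (tcross a b)) a := by
  obtain ⟨hab01, hab02, hab12⟩ := htab
  obtain ⟨hac01, hac02, hac12⟩ := htac
  obtain ⟨hs01, hs02, hs12⟩ := hsides
  have q0 : tcross a b 0 = max (a 1 + b 2) (b 1 + a 2) := rfl
  have q1 : tcross a b 1 = max (a 0 + b 2) (b 0 + a 2) := rfl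
  have q2 : tcross a b 2 = max (a 0 + b 1) (b 0 + a 1) := rfl
  have p0 : tcross c a 0 = max (c 1 + a 2) (a 1 + c 2) := rfl
  have p1 : tcross c a 1 = max (c 0 + a 2) (a 0 + c 2) := rfl
  have p2 : tcross c a 2 = max (c 0 + a 1) (a 0 + c 1) := rfl
  have e0 : tcross (tcross c a) (tcross a b) 0 =
      max (max (c 0 + a 2) (a 0 + c 2) + max (a 0 + b 1) (b 0 + a 1))
          (max (a 0 + b 2) (b 0 + a 2) + max (c 0 + a 1) (a 0 + c 1)) := rfl
  have e1 : tcross (tcross c a) (tcross a b) 1 =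
      max (max (c 1 + a 2) (a 1 + c 2) + max (a 0 + b 1) (b 0 + a 1))
          (max (a 1 + b 2) (b 1 + a 2) + max (c 0 + a 1) (a 0 + c 1)) := rfl
  have e2 : tcross (tcross c a) (tcross a b) 2 =
      max (max (c 1 + a 2) (a 1 + c 2) + max (a 0 + b 2) (b 0 + a 2))
          (max (a 1 + b 2) (b 1 + a 2) + max (c 0 + a 2) (a 0 + c 2)) := rfl
  have hd : (c 0 - a 0 > c 1 - a 1 ∧ c 0 - a 0 > c 2 - a 2) ∨
      (c 1 - a 1 > c 0 - a 0 ∧ c 1 - a 1 > c 2 - a 2) ∨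
      (c 2 - a 2 > c 0 - a 0 ∧ c 2 - a 2 > c 1 - a 1) := by
    rcases lt_trichotomy (c 0 - a 0) (c 1 - a 1) with h1 | h1 | h1
    · rcases lt_trichotomy (c 1 - a 1) (c 2 - a 2) with h2 | h2 | h2
      · right; right; constructor <;> linarith
      · exact absurd (by linarith) hac12
      · right; left; constructor <;> linarith
    · exact absurd (by linarith) hac01
    · rcases lt_trichotomy (c 0 - a 0) (c 2 - a 2) with h2 | h2 | h2
      · right; right; constructor <;> linarith
      · exact absurd (by linarith) hac02
      · left; constructor <;> linarith
  have he : (b 0 - a 0 > b 1 - a 1 ∧ b 0 - a 0 > b 2 - a 2) ∨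
      (b 1 - a 1 > b 0 - a 0 ∧ b 1 - a 1 > b 2 - a 2) ∨
      (b 2 - a 2 > b 0 - a 0 ∧ b 2 - a 2 > b 1 - a 1) := by
    rcases lt_trichotomy (b 0 - a 0) (b 1 - a 1) with h1 | h1 | h1
    · rcases lt_trichotomy (b 1 - a 1) (b 2 - a 2) with h2 | h2 | h2
      · right; right; constructor <;> linarith
      · exact absurd (by linarith) hab12
      · right; left; constructor <;> linarith
    · exact absurd (by linarith) hab01
    · rcases lt_trichotomy (b 0 - a 0) (b 2 - a 2) with h2 | h2 | h2
      · right; right; constructor <;> linarith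
      · exact absurd (by linarith) hab02
      · left; constructor <;> linarith
  rcases hd with ⟨hd1, hd2⟩ | ⟨hd1, hd2⟩ | ⟨hd1, hd2⟩ <;>
    rcases he with ⟨he1, he2⟩ | ⟨he1, he2⟩ | ⟨he1, he2⟩
  · exfalso; apply hs12
    rw [q1, q2, p1, p2]; simp only [max_def]; split_ifs <;> linarith
  · refine ⟨-(a 0 + a 1 + a 2 + (c 0 - a 0) + (b 1 - a 1)), ?_⟩
    funext i; fin_cases i
    · show a 0 = tcross (tcross c a) (tcross a b) 0 + _
      rw [e0]; simp only [max_def]; split_ifs <;> linarith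
    · show a 1 = tcross (tcross c a) (tcross a b) 1 + _
      rw [e1]; simp only [max_def]; split_ifs <;> linarith
    · show a 2 = tcross (tcross c a) (tcross a b) 2 + _
      rw [e2]; simp only [max_def]; split_ifs <;> linarith
  · refine ⟨-(a 0 + a 1 + a 2 + (c 0 - a 0) + (b 2 - a 2)), ?_⟩
    funext i; fin_cases i
    · show a 0 = tcross (tcross c a) (tcross a b) 0 + _
      rw [e0]; simp only [max_def]; split_ifs <;> linarith
    · show a 1 = tcross (tcross c a) (tcross a b) 1 + _
      rw [e1]; simp only [max_def]; split_ifs <;> linarith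
    · show a 2 = tcross (tcross c a) (tcross a b) 2 + _
      rw [e2]; simp only [max_def]; split_ifs <;> linarith
  · refine ⟨-(a 0 + a 1 + a 2 + (c 1 - a 1) + (b 0 - a 0)), ?_⟩
    funext i; fin_cases i
    · show a 0 = tcross (tcross c a) (tcross a b) 0 + _
      rw [e0]; simp only [max_def]; split_ifs <;> linarith
    · show a 1 = tcross (tcross c a) (tcross a b) 1 + _
      rw [e1]; simp only [max_def]; split_ifs <;> linarith
    · show a 2 = tcross (tcross c a) (tcross a b) 2 + _
      rw [e2]; simp only [max_def]; split_ifs <;> linarith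
  · exfalso; apply hs02
    rw [q0, q2, p0, p2]; simp only [max_def]; split_ifs <;> linarith
  · refine ⟨-(a 0 + a 1 + a 2 + (c 1 - a 1) + (b 2 - a 2)), ?_⟩
    funext i; fin_cases i
    · show a 0 = tcross (tcross c a) (tcross a b) 0 + _
      rw [e0]; simp only [max_def]; split_ifs <;> linarith
    · show a 1 = tcross (tcross c a) (tcross a b) 1 + _
      rw [e1]; simp only [max_def]; split_ifs <;> linarith
    · show a 2 = tcross (tcross c a) (tcross a b) 2 + _
      rw [e2]; simp only [max_def]; split_ifs <;> linarith
  · refine ⟨-(a 0 + a 1 + a 2 + (c 2 - a 2) + (b 0 - a 0)), ?_⟩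
    funext i; fin_cases i
    · show a 0 = tcross (tcross c a) (tcross a b) 0 + _
      rw [e0]; simp only [max_def]; split_ifs <;> linarith
    · show a 1 = tcross (tcross c a) (tcross a b) 1 + _
      rw [e1]; simp only [max_def]; split_ifs <;> linarith
    · show a 2 = tcross (tcross c a) (tcross a b) 2 + _
      rw [e2]; simp only [max_def]; split_ifs <;> linarith
  · refine ⟨-(a 0 + a 1 + a 2 + (c 2 - a 2) + (b 1 - a 1)), ?_⟩
    funext i; fin_cases i
    · show a 0 = tcross (tcross c a) (tcross a b) 0 + _
      rw [e0]; simp only [max_def]; split_ifs <;> linarith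
    · show a 1 = tcross (tcross c a) (tcross a b) 1 + _
      rw [e1]; simp only [max_def]; split_ifs <;> linarith
    · show a 2 = tcross (tcross c a) (tcross a b) 2 + _
      rw [e2]; simp only [max_def]; split_ifs <;> linarith
  · exfalso; apply hs01
    rw [q0, q1, p0, p1]; simp only [max_def]; split_ifs <;> linarith
end

section
/- Let a, b, c ∈ ℝ³ be pairwise projectively inequivalent and tropically non-collinear. Then (c⊗a) ⊗ (a⊗b) is projectively equivalent to one of the three points −(c⊗a), −(a⊗b), or a. -/
set_option maxHeartbeats 4000000 in
lemma tcross_core (a0 a1 a2 b0 b1 b2 c0 c1 c2 u0 u1 u2 v0 v1 v2 w0 w1 w2 : ℝ)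
    (hu0a : c1 + a2 ≤ u0) (hu0b : a1 + c2 ≤ u0) (hu0 : u0 = c1 + a2 ∨ u0 = a1 + c2)
    (hu1a : c0 + a2 ≤ u1) (hu1b : a0 + c2 ≤ u1) (hu1 : u1 = c0 + a2 ∨ u1 = a0 + c2)
    (hu2a : c0 + a1 ≤ u2) (hu2b : a0 + c1 ≤ u2) (hu2 : u2 = c0 + a1 ∨ u2 = a0 + c1)
    (hv0a : a1 + b2 ≤ v0) (hv0b : b1 + a2 ≤ v0) (hv0 : v0 = a1 + b2 ∨ v0 = b1 + a2)
    (hv1a : a0 + b2 ≤ v1) (hv1b : b0 + a2 ≤ v1) (hv1 : v1 = a0 + b2 ∨ v1 = b0 + a2)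
    (hv2a : a0 + b1 ≤ v2) (hv2b : b0 + a1 ≤ v2) (hv2 : v2 = a0 + b1 ∨ v2 = b0 + a1)
    (hw0a : u1 + v2 ≤ w0) (hw0b : v1 + u2 ≤ w0) (hw0 : w0 = u1 + v2 ∨ w0 = v1 + u2)
    (hw1a : u0 + v2 ≤ w1) (hw1b : v0 + u2 ≤ w1) (hw1 : w1 = u0 + v2 ∨ w1 = v0 + u2)
    (hw2a : u0 + v1 ≤ w2) (hw2b : v0 + u1 ≤ w2) (hw2 : w2 = u0 + v1 ∨ w2 = v0 + u1) :
    (w1 + u1 = w0 + u0 ∧ w2 + u2 = w0 + u0) ∨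
    (w1 + v1 = w0 + v0 ∧ w2 + v2 = w0 + v0) ∨
    (a1 - w1 = a0 - w0 ∧ a2 - w2 = a0 - w0) := by
  rcases hw0 with h | h <;> subst h <;>
  rcases hw1 with h | h <;> subst h <;>
  rcases hw2 with h | h <;> subst h <;>
  rcases hu0 with h | h <;> subst h <;>
  rcases hu1 with h | h <;> subst h <;>
  rcases hu2 with h | h <;> subst h <;>
  rcases hv0 with h | h <;> subst h <;>
  rcases hv1 with h | h <;> subst h <;>
  rcases hv2 with h | h <;> subst h <;>
  first
  | exact Or.inl ⟨by linarith, by linarith⟩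
  | exact Or.inr (Or.inl ⟨by linarith, by linarith⟩)
  | exact Or.inr (Or.inr ⟨by linarith, by linarith⟩)

lemma pe_neg (w u : Fin 3 → ℝ) (h1 : w 1 + u 1 = w 0 + u 0) (h2 : w 2 + u 2 = w 0 + u 0) :
    PEquiv3 w (-u) := by
  refine ⟨-(w 0 + u 0), funext fun i => ?_⟩
  fin_cases i <;> simp [Pi.neg_apply] <;> linarith

lemma pe_a (w a : Fin 3 → ℝ) (h1 : a 1 - w 1 = a 0 - w 0) (h2 : a 2 - w 2 = a 0 - w 0) :
    PEquiv3 w a := by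
  refine ⟨a 0 - w 0, funext fun i => ?_⟩
  fin_cases i <;> simp <;> linarith

/-- for non-collinear, pairwise inequivalent points, the expression
`(c⊗a)⊗(a⊗b)` takes one of three values. -/
theorem three_values (a b c : Fin 3 → ℝ)
    (hab : ¬ PEquiv3 a b) (hbc : ¬ PEquiv3 b c) (hac : ¬ PEquiv3 a c)
    (hcol : ¬ TropCollinear a b c) :
    PEquiv3 (tcross (tcross c a) (tcross a b)) (-(tcross c a)) ∨
    PEquiv3 (tcross (tcross c a) (tcross a b)) (-(tcross a b)) ∨
    PEquiv3 (tcross (tcross c a) (tcross a b)) a := by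
  set u := tcross c a with hu
  set v := tcross a b with hv
  set w := tcross u v with hw
  have hu0 : u 0 = max (c 1 + a 2) (a 1 + c 2) := rfl
  have hu1 : u 1 = max (c 0 + a 2) (a 0 + c 2) := rfl
  have hu2 : u 2 = max (c 0 + a 1) (a 0 + c 1) := rfl
  have hv0 : v 0 = max (a 1 + b 2) (b 1 + a 2) := rfl
  have hv1 : v 1 = max (a 0 + b 2) (b 0 + a 2) := rfl
  have hv2 : v 2 = max (a 0 + b 1) (b 0 + a 1) := rfl
  have hw0 : w 0 = max (u 1 + v 2) (v 1 + u 2) := rfl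
  have hw1 : w 1 = max (u 0 + v 2) (v 0 + u 2) := rfl
  have hw2 : w 2 = max (u 0 + v 1) (v 0 + u 1) := rfl
  have key := tcross_core (a 0) (a 1) (a 2) (b 0) (b 1) (b 2) (c 0) (c 1) (c 2)
      (u 0) (u 1) (u 2) (v 0) (v 1) (v 2) (w 0) (w 1) (w 2)
      (hu0 ▸ le_max_left _ _) (hu0 ▸ le_max_right _ _) (hu0 ▸ max_choice _ _)
      (hu1 ▸ le_max_left _ _) (hu1 ▸ le_max_right _ _) (hu1 ▸ max_choice _ _)
      (hu2 ▸ le_max_left _ _) (hu2 ▸ le_max_right _ _) (hu2 ▸ max_choice _ _)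
      (hv0 ▸ le_max_left _ _) (hv0 ▸ le_max_right _ _) (hv0 ▸ max_choice _ _)
      (hv1 ▸ le_max_left _ _) (hv1 ▸ le_max_right _ _) (hv1 ▸ max_choice _ _)
      (hv2 ▸ le_max_left _ _) (hv2 ▸ le_max_right _ _) (hv2 ▸ max_choice _ _)
      (hw0 ▸ le_max_left _ _) (hw0 ▸ le_max_right _ _) (hw0 ▸ max_choice _ _)
      (hw1 ▸ le_max_left _ _) (hw1 ▸ le_max_right _ _) (hw1 ▸ max_choice _ _)
      (hw2 ▸ le_max_left _ _) (hw2 ▸ le_max_right _ _) (hw2 ▸ max_choice _ _)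
  rcases key with ⟨h1, h2⟩ | ⟨h1, h2⟩ | ⟨h1, h2⟩
  · exact Or.inl (pe_neg w u h1 h2)
  · exact Or.inr (Or.inl (pe_neg w v h1 h2))
  · exact Or.inr (Or.inr (pe_a w a h1 h2))
end

section
/- Let a, b, c ∈ ℝ² satisfy the six inequalities a₁ < b₁ < c₁, a₂ < c₂ < b₂, and b₁−b₂ < a₁−a₂ < c₁−c₂. Then the embedded points ĵ(a), ĵ(b), ĵ(c) ∈ ℝ³ form a transversal tropical triangle. -/
/-- the six inequalities imply a transversal tropical triangle. -/
theorem sixIneqs_imp_transTriangle (a b c : Fin 2 → ℝ) (h : SixIneqs a b c) :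
    TransTriangle (jhat a) (jhat b) (jhat c) := by
  obtain ⟨h1, h2, h3, h4, h5, h6⟩ := h
  have hab : tcross (jhat a) (jhat b) = ![b 1, b 0, a 0 + b 1] := by
    funext i; fin_cases i <;> simp [tcross, jhat] <;> linarith
  have hbc : tcross (jhat b) (jhat c) = ![b 1, c 0, c 0 + b 1] := by
    funext i; fin_cases i <;> simp [tcross, jhat] <;> linarith
  have hca : tcross (jhat c) (jhat a) = ![c 1, c 0, c 0 + a 1] := by
    funext i; fin_cases i <;> simp [tcross, jhat] <;> linarith
  refine ⟨?_, ?_, ?_, ?_, ?_, ?_⟩ <;>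
    simp only [Transversal3, hab, hbc, hca] <;>
    refine ⟨?_, ?_, ?_⟩ <;> simp [jhat] <;> intro hcon <;> linarith
end

section
/- Let a, b, c ∈ ℝ³ be three pairwise projectively inequivalent points (interior points of the tropical projective plane). Then a, b, c form a transversal tropical triangle if and only if there is a relabeling (a′, b′, c′) of (a, b, c) satisfying the six inequalities: b′₁−b′₂ < a′₁−a′₂ < c′₁−c′₂, a′₂−a′₃ < c′₂−c′₃ < b′₂−b′₃, and c′₃−c′₁ < b′₃−b′₁ < a′₃−a′₁. -/
section AuxTransTriangle

lemma tcross_comm' (a b : Fin 3 → ℝ) : tcross a b = tcross b a := by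
  funext i
  fin_cases i <;>
    simp only [tcross, Matrix.cons_val_zero, Matrix.cons_val_one, Matrix.head_cons,
      Matrix.cons_val_two, Matrix.tail_cons] <;>
    exact max_comm _ _

lemma Transversal3.symm' {a b : Fin 3 → ℝ} (h : Transversal3 a b) : Transversal3 b a := by
  obtain ⟨h1, h2, h3⟩ := h
  exact ⟨fun e => h1 (by linarith), fun e => h2 (by linarith), fun e => h3 (by linarith)⟩

lemma TransTriangle.rot {a b c : Fin 3 → ℝ} (h : TransTriangle a b c) : TransTriangle b c a :=
  ⟨h.2.1, h.2.2.1, h.1, h.2.2.2.2.1, h.2.2.2.2.2, h.2.2.2.1⟩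

lemma TransTriangle.swap {a b c : Fin 3 → ℝ} (h : TransTriangle a b c) : TransTriangle b a c := by
  obtain ⟨hab, hbc, hca, hABBC, hBCCA, hCAAB⟩ := h
  refine ⟨hab.symm', hca.symm', hbc.symm', ?_, ?_, ?_⟩
  · rw [tcross_comm' b a, tcross_comm' a c]; exact hCAAB.symm'
  · rw [tcross_comm' a c, tcross_comm' c b]; exact hBCCA.symm'
  · rw [tcross_comm' c b, tcross_comm' b a]; exact hABBC.symm'

set_option maxHeartbeats 4000000 in
lemma core_fwd (a b c : Fin 3 → ℝ) (h : TransTriangle a b c)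
    (hba : b 0 - b 1 < a 0 - a 1) (hac : a 0 - a 1 < c 0 - c 1) : ProjSixIneqs a b c := by
  obtain ⟨⟨-, hab2, hab3⟩, ⟨-, hbc2, hbc3⟩, ⟨-, hca2, hca3⟩, hAB, hBC, hCA⟩ := h
  simp only [Transversal3, tcross, Matrix.cons_val_zero, Matrix.cons_val_one, Matrix.head_cons,
    Matrix.cons_val_two, Matrix.tail_cons] at hAB hBC hCA
  obtain ⟨k1, k2, k3⟩ := hAB
  obtain ⟨k4, k5, k6⟩ := hBC
  obtain ⟨k7, k8, k9⟩ := hCA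
  rw [max_eq_left (show b 0 + a 1 ≤ a 0 + b 1 by linarith)] at k2 k3 k8 k9
  rw [max_eq_right (show b 0 + c 1 ≤ c 0 + b 1 by linarith)] at k2 k3 k5 k6
  rw [max_eq_left (show a 0 + c 1 ≤ c 0 + a 1 by linarith)] at k5 k6 k8 k9
  unfold ProjSixIneqs
  rcases hab3.lt_or_gt with o1 | o1 <;>
  rcases hbc3.lt_or_gt with o2 | o2 <;>
  rcases hca3.lt_or_gt with o3 | o3 <;>
  rcases hab2.lt_or_gt with o4 | o4 <;>
  rcases hbc2.lt_or_gt with o5 | o5 <;>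
  rcases hca2.lt_or_gt with o6 | o6 <;>
  rcases max_cases (a 1 + b 2) (b 1 + a 2) with ⟨e1, he1⟩ | ⟨e1, he1⟩ <;>
  rw [e1] at k1 k2 k7 k8 <;> (try exact absurd he1 (by linarith)) <;>
  rcases max_cases (a 0 + b 2) (b 0 + a 2) with ⟨e2, he2⟩ | ⟨e2, he2⟩ <;>
  rw [e2] at k1 k3 k7 k9 <;> (try exact absurd he2 (by linarith)) <;>
  rcases max_cases (b 1 + c 2) (c 1 + b 2) with ⟨e3, he3⟩ | ⟨e3, he3⟩ <;>
  rw [e3] at k1 k2 k4 k5 <;> (try exact absurd he3 (by linarith)) <;>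
  rcases max_cases (b 0 + c 2) (c 0 + b 2) with ⟨e4, he4⟩ | ⟨e4, he4⟩ <;>
  rw [e4] at k1 k3 k4 k6 <;> (try exact absurd he4 (by linarith)) <;>
  rcases max_cases (c 1 + a 2) (a 1 + c 2) with ⟨e5, he5⟩ | ⟨e5, he5⟩ <;>
  rw [e5] at k4 k5 k7 k8 <;> (try exact absurd he5 (by linarith)) <;>
  rcases max_cases (c 0 + a 2) (a 0 + c 2) with ⟨e6, he6⟩ | ⟨e6, he6⟩ <;>
  rw [e6] at k4 k6 k7 k9 <;> (try exact absurd he6 (by linarith)) <;>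
  first
    | exact ⟨by linarith, by linarith, by linarith, by linarith, by linarith, by linarith⟩
    | exact absurd (by linarith) k1
    | exact absurd (by linarith) k2
    | exact absurd (by linarith) k3
    | exact absurd (by linarith) k4
    | exact absurd (by linarith) k5
    | exact absurd (by linarith) k6
    | exact absurd (by linarith) k7
    | exact absurd (by linarith) k8
    | exact absurd (by linarith) k9

lemma core_bwd (a b c : Fin 3 → ℝ) (h : ProjSixIneqs a b c) : TransTriangle a b c := by
  obtain ⟨h1, h2, h3, h4, h5, h6⟩ := h
  have eAB : tcross a b = ![b 1 + a 2, b 0 + a 2, a 0 + b 1] := by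
    unfold tcross
    rw [max_eq_right (show a 1 + b 2 ≤ b 1 + a 2 by linarith),
      max_eq_right (show a 0 + b 2 ≤ b 0 + a 2 by linarith),
      max_eq_left (show b 0 + a 1 ≤ a 0 + b 1 by linarith)]
  have eBC : tcross b c = ![b 1 + c 2, c 0 + b 2, c 0 + b 1] := by
    unfold tcross
    rw [max_eq_left (show c 1 + b 2 ≤ b 1 + c 2 by linarith),
      max_eq_right (show b 0 + c 2 ≤ c 0 + b 2 by linarith),
      max_eq_right (show b 0 + c 1 ≤ c 0 + b 1 by linarith)]
  have eCA : tcross c a = ![c 1 + a 2, c 0 + a 2, c 0 + a 1] := by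
    unfold tcross
    rw [max_eq_left (show a 1 + c 2 ≤ c 1 + a 2 by linarith),
      max_eq_left (show a 0 + c 2 ≤ c 0 + a 2 by linarith),
      max_eq_left (show a 0 + c 1 ≤ c 0 + a 1 by linarith)]
  rw [TransTriangle, eAB, eBC, eCA]
  simp only [Transversal3, Matrix.cons_val_zero, Matrix.cons_val_one, Matrix.head_cons,
    Matrix.cons_val_two, Matrix.tail_cons]
  refine ⟨⟨?_,?_,?_⟩,⟨?_,?_,?_⟩,⟨?_,?_,?_⟩,⟨?_,?_,?_⟩,⟨?_,?_,?_⟩,⟨?_,?_,?_⟩⟩ <;>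
    first
      | exact ne_of_gt (by linarith)
      | exact ne_of_lt (by linarith)

end AuxTransTriangle

/-- projective characterization of transversal tropical triangles
by six inequalities, up to relabeling. -/
theorem transTriangle_iff_projSixIneqs (a b c : Fin 3 → ℝ)
    (hab : ¬ PEquiv3 a b) (hbc : ¬ PEquiv3 b c) (hac : ¬ PEquiv3 a c) :
    TransTriangle a b c ↔
      ∃ σ : Equiv.Perm (Fin 3),
        ProjSixIneqs (![a, b, c] (σ 0)) (![a, b, c] (σ 1)) (![a, b, c] (σ 2)) := by
  constructor
  · intro h
    have d1 : a 0 - a 1 ≠ b 0 - b 1 := fun e => h.1.1 (by linarith)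
    have d2 : b 0 - b 1 ≠ c 0 - c 1 := fun e => h.2.1.1 (by linarith)
    have d3 : a 0 - a 1 ≠ c 0 - c 1 := fun e => h.2.2.1.1 (by linarith)
    rcases d1.lt_or_gt with o1 | o1
    · rcases d2.lt_or_gt with o2 | o2
      · -- a < b < c : triple (b, a, c), σ = swap 0 1
        refine ⟨Equiv.swap 0 1, ?_⟩
        rw [show (Equiv.swap 0 1 : Equiv.Perm (Fin 3)) 0 = 1 by decide,
          show (Equiv.swap 0 1 : Equiv.Perm (Fin 3)) 1 = 0 by decide,
          show (Equiv.swap 0 1 : Equiv.Perm (Fin 3)) 2 = 2 by decide]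
        simp only [Matrix.cons_val_zero, Matrix.cons_val_one, Matrix.head_cons,
          Matrix.cons_val_two, Matrix.tail_cons]
        exact core_fwd b a c h.swap (by linarith) (by linarith)
      · rcases d3.lt_or_gt with o3 | o3
        · -- a < c < b : triple (c, a, b), σ = swap 1 2 * swap 0 1
          refine ⟨Equiv.swap 1 2 * Equiv.swap 0 1, ?_⟩
          rw [show (Equiv.swap 1 2 * Equiv.swap 0 1 : Equiv.Perm (Fin 3)) 0 = 2 by decide,
            show (Equiv.swap 1 2 * Equiv.swap 0 1 : Equiv.Perm (Fin 3)) 1 = 0 by decide,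
            show (Equiv.swap 1 2 * Equiv.swap 0 1 : Equiv.Perm (Fin 3)) 2 = 1 by decide]
          simp only [Matrix.cons_val_zero, Matrix.cons_val_one, Matrix.head_cons,
            Matrix.cons_val_two, Matrix.tail_cons]
          exact core_fwd c a b h.rot.rot (by linarith) (by linarith)
        · -- c < a < b : triple (a, c, b), σ = swap 1 2
          refine ⟨Equiv.swap 1 2, ?_⟩
          rw [show (Equiv.swap 1 2 : Equiv.Perm (Fin 3)) 0 = 0 by decide,
            show (Equiv.swap 1 2 : Equiv.Perm (Fin 3)) 1 = 2 by decide,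
            show (Equiv.swap 1 2 : Equiv.Perm (Fin 3)) 2 = 1 by decide]
          simp only [Matrix.cons_val_zero, Matrix.cons_val_one, Matrix.head_cons,
            Matrix.cons_val_two, Matrix.tail_cons]
          exact core_fwd a c b h.swap.rot (by linarith) (by linarith)
    · rcases d3.lt_or_gt with o3 | o3
      · -- b < a < c : identity
        refine ⟨1, ?_⟩
        rw [show (1 : Equiv.Perm (Fin 3)) 0 = 0 by decide,
          show (1 : Equiv.Perm (Fin 3)) 1 = 1 by decide,
          show (1 : Equiv.Perm (Fin 3)) 2 = 2 by decide]
        simp only [Matrix.cons_val_zero, Matrix.cons_val_one, Matrix.head_cons,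
          Matrix.cons_val_two, Matrix.tail_cons]
        exact core_fwd a b c h (by linarith) (by linarith)
      · rcases d2.lt_or_gt with o2 | o2
        · -- b < c < a : triple (c, b, a), σ = swap 0 2
          refine ⟨Equiv.swap 0 2, ?_⟩
          rw [show (Equiv.swap 0 2 : Equiv.Perm (Fin 3)) 0 = 2 by decide,
            show (Equiv.swap 0 2 : Equiv.Perm (Fin 3)) 1 = 1 by decide,
            show (Equiv.swap 0 2 : Equiv.Perm (Fin 3)) 2 = 0 by decide]
          simp only [Matrix.cons_val_zero, Matrix.cons_val_one, Matrix.head_cons,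
            Matrix.cons_val_two, Matrix.tail_cons]
          exact core_fwd c b a h.rot.swap (by linarith) (by linarith)
        · -- c < b < a : triple (b, c, a), σ = swap 0 1 * swap 1 2
          refine ⟨Equiv.swap 0 1 * Equiv.swap 1 2, ?_⟩
          rw [show (Equiv.swap 0 1 * Equiv.swap 1 2 : Equiv.Perm (Fin 3)) 0 = 1 by decide,
            show (Equiv.swap 0 1 * Equiv.swap 1 2 : Equiv.Perm (Fin 3)) 1 = 2 by decide,
            show (Equiv.swap 0 1 * Equiv.swap 1 2 : Equiv.Perm (Fin 3)) 2 = 0 by decide]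
          simp only [Matrix.cons_val_zero, Matrix.cons_val_one, Matrix.head_cons,
            Matrix.cons_val_two, Matrix.tail_cons]
          exact core_fwd b c a h.rot (by linarith) (by linarith)
  · rintro ⟨σ, hσ⟩
    have hcases : ∀ i : Fin 3, i = 0 ∨ i = 1 ∨ i = 2 := by decide
    rcases hcases (σ 0) with e0 | e0 | e0 <;>
    rcases hcases (σ 1) with e1 | e1 | e1 <;>
    rcases hcases (σ 2) with e2 | e2 | e2 <;>
    rw [e0, e1, e2] at hσ <;>
    simp only [Matrix.cons_val_zero, Matrix.cons_val_one, Matrix.head_cons,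
      Matrix.cons_val_two, Matrix.tail_cons] at hσ <;>
    first
      | exact absurd (σ.injective (e0.trans e1.symm)) (by decide)
      | exact absurd (σ.injective (e0.trans e2.symm)) (by decide)
      | exact absurd (σ.injective (e1.trans e2.symm)) (by decide)
      | exact core_bwd _ _ _ hσ
      | exact (core_bwd _ _ _ hσ).rot
      | exact (core_bwd _ _ _ hσ).rot.rot
      | exact (core_bwd _ _ _ hσ).swap
      | exact (core_bwd _ _ _ hσ).swap.rot
      | exact (core_bwd _ _ _ hσ).rot.swap
end

section
/- Let a, b, c ∈ ℝ² satisfy the six inequalities a₁ < b₁ < c₁, a₂ < c₂ < b₂, and b₁−b₂ < a₁−a₂ < c₁−c₂. Then the set of points u ∈ ℝ² such that ĵ(u) is tropically spanned by ĵ(a), ĵ(b), ĵ(c) equals the classical convex hull in ℝ² of the six points a, (a₁, a₁+b₂−b₁), b, (c₁, b₂), c, (a₂+c₁−c₂, a₂); i.e., the tropical span of the vertices of a transversal tropical triangle is the solid classical hexagon with these six vertices. -/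
lemma sup3 (f : Fin 3 → ℝ) (h : (Finset.univ : Finset (Fin 3)).Nonempty) :
    Finset.univ.sup' h f = max (f 0) (max (f 1) (f 2)) := by
  apply le_antisymm
  · exact Finset.sup'_le _ _ (fun j _ => by fin_cases j <;> simp [le_max_iff, le_refl])
  · simp only [max_le_iff]
    exact ⟨Finset.le_sup' f (Finset.mem_univ 0), Finset.le_sup' f (Finset.mem_univ 1),
      Finset.le_sup' f (Finset.mem_univ 2)⟩

lemma qbounds (a b c : Fin 2 → ℝ) (h : SixIneqs a b c) (j : Fin 3) :
    (![jhat a, jhat b, jhat c] j 2 = 0) ∧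
    a 0 ≤ ![jhat a, jhat b, jhat c] j 0 ∧ ![jhat a, jhat b, jhat c] j 0 ≤ c 0 ∧
    a 1 ≤ ![jhat a, jhat b, jhat c] j 1 ∧ ![jhat a, jhat b, jhat c] j 1 ≤ b 1 ∧
    ![jhat a, jhat b, jhat c] j 1 - ![jhat a, jhat b, jhat c] j 0 ≤ b 1 - b 0 ∧
    ![jhat a, jhat b, jhat c] j 0 - ![jhat a, jhat b, jhat c] j 1 ≤ c 0 - c 1 := by
  obtain ⟨h1, h2, h3, h4, h5, h6⟩ := h
  fin_cases j <;>
    refine ⟨by simp [jhat, Matrix.vecHead, Matrix.vecTail], ?_, ?_, ?_, ?_, ?_, ?_⟩ <;>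
      simp [jhat, Matrix.vecHead, Matrix.vecTail] <;> linarith

lemma hex_of_spanned (a b c x : Fin 2 → ℝ) (h : SixIneqs a b c)
    (hx : TropSpanned (jhat x) ![jhat a, jhat b, jhat c]) :
    a 0 ≤ x 0 ∧ x 0 ≤ c 0 ∧ a 1 ≤ x 1 ∧ x 1 ≤ b 1 ∧
      c 1 - c 0 ≤ x 1 - x 0 ∧ x 1 - x 0 ≤ b 1 - b 0 := by
  obtain ⟨S, hS, lam, l, hl⟩ := hx
  set q : Fin 3 → Fin 3 → ℝ := ![jhat a, jhat b, jhat c] with hq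
  have h0 := congrFun hl 0
  have h1 := congrFun hl 1
  have h2 := congrFun hl 2
  simp only [jhat, Matrix.cons_val_zero, Matrix.cons_val_one, Matrix.head_cons] at h0 h1 h2
  -- h2 : S.sup' hS (fun j => lam j + q j 2) = 0 + l
  have hq2 : ∀ j, q j 2 = 0 := fun j => (qbounds a b c h j).1
  have hjx2 : jhat x 2 = 0 := by simp [jhat]
  have hlaml : ∀ j ∈ S, lam j ≤ l := by
    intro j hj
    have := Finset.le_sup' (fun j => lam j + q j 2) hj
    rw [h2] at this
    rw [hq2 j] at this
    simp [jhat] at this ⊢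
    linarith [this]
  obtain ⟨j0, hj0, hj0e⟩ := Finset.exists_mem_eq_sup' hS (fun j => lam j + q j 2)
  have hl0 : l = lam j0 := by
    rw [h2] at hj0e; rw [hq2 j0] at hj0e; simp [jhat] at hj0e; linarith [hj0e]
  obtain ⟨j1, hj1, hj1e⟩ := Finset.exists_mem_eq_sup' hS (fun j => lam j + q j 0)
  obtain ⟨j2, hj2, hj2e⟩ := Finset.exists_mem_eq_sup' hS (fun j => lam j + q j 1)
  rw [h0] at hj1e
  rw [h1] at hj2e
  -- lower bounds via j0
  have hb00 := Finset.le_sup' (fun j => lam j + q j 0) hj0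
  have hb01 := Finset.le_sup' (fun j => lam j + q j 1) hj0
  rw [h0] at hb00; rw [h1] at hb01
  -- bound at attaining indices
  have hx1le := Finset.le_sup' (fun j => lam j + q j 1) hj1
  have hx0le := Finset.le_sup' (fun j => lam j + q j 0) hj2
  rw [h1] at hx1le; rw [h0] at hx0le
  have B0 := qbounds a b c h j0
  have B1 := qbounds a b c h j1
  have B2 := qbounds a b c h j2
  have hl1 := hlaml j1 hj1
  have hl2 := hlaml j2 hj2

  refine ⟨by linarith [B0.2.1], by linarith [B1.2.2.1], by linarith [B0.2.2.2.1],
    by linarith [B2.2.2.2.2.1], by linarith [B1.2.2.2.2.2.2], by linarith [B2.2.2.2.2.2.1]⟩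

lemma max3_eq (A B C w : ℝ) (hA : A ≤ w) (hB : B ≤ w) (hC : C ≤ w)
    (h : A = w ∨ B = w ∨ C = w) : max A (max B C) = w := by
  rcases h with h | h | h <;> subst h
  · exact max_eq_left (max_le hB hC)
  · rw [max_eq_left hC]; exact max_eq_right hA
  · rw [max_eq_right hB]; exact max_eq_right hA

lemma spanned_of_hex (a b c x : Fin 2 → ℝ) (h : SixIneqs a b c)
    (hx : a 0 ≤ x 0 ∧ x 0 ≤ c 0 ∧ a 1 ≤ x 1 ∧ x 1 ≤ b 1 ∧
      c 1 - c 0 ≤ x 1 - x 0 ∧ x 1 - x 0 ≤ b 1 - b 0) :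
    TropSpanned (jhat x) ![jhat a, jhat b, jhat c] := by
  obtain ⟨hx1, hx2, hx3, hx4, hx5, hx6⟩ := hx
  refine ⟨Finset.univ, Finset.univ_nonempty, ![0, x 1 - b 1, x 0 - c 0], 0, ?_⟩
  funext i
  rw [sup3]
  fin_cases i
  · show max (0 + a 0) (max (x 1 - b 1 + b 0) (x 0 - c 0 + c 0)) = x 0 + 0
    exact max3_eq _ _ _ _ (by linarith) (by linarith) (by linarith) (Or.inr (Or.inr (by ring)))
  · show max (0 + a 1) (max (x 1 - b 1 + b 1) (x 0 - c 0 + c 1)) = x 1 + 0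
    exact max3_eq _ _ _ _ (by linarith) (by linarith) (by linarith) (Or.inr (Or.inl (by ring)))
  · show max (0 + 0) (max (x 1 - b 1 + 0) (x 0 - c 0 + 0)) = 0 + 0
    exact max3_eq _ _ _ _ (by linarith) (by linarith) (by linarith) (Or.inl (by ring))

lemma seg2 (p q z : Fin 2 → ℝ) (t s : ℝ) (ht : 0 ≤ t) (hs : 0 ≤ s) (hts : t + s = 1)
    (h0 : t * p 0 + s * q 0 = z 0) (h1 : t * p 1 + s * q 1 = z 1) :
    z ∈ segment ℝ p q := by
  refine ⟨t, s, ht, hs, hts, ?_⟩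
  funext i
  fin_cases i <;> simpa [smul_eq_mul]

lemma auxle (u v r p q : ℝ) (hu : 0 ≤ u) (hv : 0 ≤ v) (huv : u + v = 1)
    (hp : r ≤ p) (hq : r ≤ q) : r ≤ u * p + v * q := by
  calc r = u * r + v * r := by rw [← add_mul, huv, one_mul]
    _ ≤ u * p + v * q :=
      add_le_add (mul_le_mul_of_nonneg_left hp hu) (mul_le_mul_of_nonneg_left hq hv)

lemma auxge (u v r p q : ℝ) (hu : 0 ≤ u) (hv : 0 ≤ v) (huv : u + v = 1)
    (hp : p ≤ r) (hq : q ≤ r) : u * p + v * q ≤ r := by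
  calc u * p + v * q ≤ u * r + v * r :=
      add_le_add (mul_le_mul_of_nonneg_left hp hu) (mul_le_mul_of_nonneg_left hq hv)
    _ = r := by rw [← add_mul, huv, one_mul]

lemma hexConvex (a b c : Fin 2 → ℝ) :
    Convex ℝ {x : Fin 2 → ℝ | a 0 ≤ x 0 ∧ x 0 ≤ c 0 ∧ a 1 ≤ x 1 ∧ x 1 ≤ b 1 ∧
      c 1 - c 0 ≤ x 1 - x 0 ∧ x 1 - x 0 ≤ b 1 - b 0} := by
  intro x hx y hy u v hu hv huv
  obtain ⟨p1, p2, p3, p4, p5, p6⟩ := hx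
  obtain ⟨q1, q2, q3, q4, q5, q6⟩ := hy
  simp only [Set.mem_setOf_eq, Pi.add_apply, Pi.smul_apply, smul_eq_mul]
  refine ⟨auxle u v _ _ _ hu hv huv p1 q1, auxge u v _ _ _ hu hv huv p2 q2,
    auxle u v _ _ _ hu hv huv p3 q3, auxge u v _ _ _ hu hv huv p4 q4, ?_, ?_⟩
  · have := auxle u v _ _ _ hu hv huv p5 q5
    nlinarith [this]
  · have := auxge u v _ _ _ hu hv huv p6 q6
    nlinarith [this]

lemma hull_subset_hex (a b c : Fin 2 → ℝ) (h : SixIneqs a b c) :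
    convexHull ℝ ({a, ![a 0, a 0 + b 1 - b 0], b, ![c 0, b 1], c,
        ![a 1 + c 0 - c 1, a 1]} : Set (Fin 2 → ℝ)) ⊆
      {x : Fin 2 → ℝ | a 0 ≤ x 0 ∧ x 0 ≤ c 0 ∧ a 1 ≤ x 1 ∧ x 1 ≤ b 1 ∧
        c 1 - c 0 ≤ x 1 - x 0 ∧ x 1 - x 0 ≤ b 1 - b 0} := by
  obtain ⟨h1, h2, h3, h4, h5, h6⟩ := h
  apply convexHull_min _ (hexConvex a b c)
  intro z hz
  simp only [Set.mem_insert_iff, Set.mem_singleton_iff] at hz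
  rcases hz with rfl | rfl | rfl | rfl | rfl | rfl <;>
    refine ⟨?_, ?_, ?_, ?_, ?_, ?_⟩ <;>
      (try simp only [Matrix.cons_val_zero, Matrix.cons_val_one, Matrix.head_cons]) <;> linarith

lemma hex_subset_hull (a b c : Fin 2 → ℝ) (h : SixIneqs a b c) (x : Fin 2 → ℝ)
    (hx : a 0 ≤ x 0 ∧ x 0 ≤ c 0 ∧ a 1 ≤ x 1 ∧ x 1 ≤ b 1 ∧
      c 1 - c 0 ≤ x 1 - x 0 ∧ x 1 - x 0 ≤ b 1 - b 0) :
    x ∈ convexHull ℝ ({a, ![a 0, a 0 + b 1 - b 0], b, ![c 0, b 1], c,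
        ![a 1 + c 0 - c 1, a 1]} : Set (Fin 2 → ℝ)) := by
  obtain ⟨h1, h2, h3, h4, h5, h6⟩ := h
  obtain ⟨hx1, hx2, hx3, hx4, hx5, hx6⟩ := hx
  set V : Set (Fin 2 → ℝ) := {a, ![a 0, a 0 + b 1 - b 0], b, ![c 0, b 1], c,
    ![a 1 + c 0 - c 1, a 1]} with hV
  have ma : a ∈ convexHull ℝ V := subset_convexHull ℝ V (by simp [hV])
  have m2 : (![a 0, a 0 + b 1 - b 0] : Fin 2 → ℝ) ∈ convexHull ℝ V :=
    subset_convexHull ℝ V (by simp [hV])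
  have mb : b ∈ convexHull ℝ V := subset_convexHull ℝ V (by simp [hV])
  have m4 : (![c 0, b 1] : Fin 2 → ℝ) ∈ convexHull ℝ V := subset_convexHull ℝ V (by simp [hV])
  have mc : c ∈ convexHull ℝ V := subset_convexHull ℝ V (by simp [hV])
  have m6 : (![a 1 + c 0 - c 1, a 1] : Fin 2 → ℝ) ∈ convexHull ℝ V :=
    subset_convexHull ℝ V (by simp [hV])
  have hLmem : (![max (a 0) (x 1 - b 1 + b 0), x 1] : Fin 2 → ℝ) ∈ convexHull ℝ V := by
    rcases le_total (x 1 - b 1 + b 0) (a 0) with hc | hc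
    · have hmax : max (a 0) (x 1 - b 1 + b 0) = a 0 := max_eq_left hc
      have hd : a 0 + b 1 - b 0 - a 1 ≠ 0 := (by linarith : (0:ℝ) < a 0 + b 1 - b 0 - a 1).ne'
      refine (convex_convexHull ℝ V).segment_subset ma m2
        (seg2 _ _ _ ((a 0 + b 1 - b 0 - x 1) / (a 0 + b 1 - b 0 - a 1))
          ((x 1 - a 1) / (a 0 + b 1 - b 0 - a 1))
          (div_nonneg (by linarith) (by linarith)) (div_nonneg (by linarith) (by linarith))
          (by field_simp [hd] <;> ring) ?_ ?_) <;>
        simp only [Matrix.cons_val_zero, Matrix.cons_val_one, Matrix.head_cons, hmax] <;>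
        · field_simp [hd] <;> ring
    · have hmax : max (a 0) (x 1 - b 1 + b 0) = x 1 - b 1 + b 0 := max_eq_right hc
      have hd : b 0 - a 0 ≠ 0 := (by linarith : (0:ℝ) < b 0 - a 0).ne'
      refine (convex_convexHull ℝ V).segment_subset m2 mb
        (seg2 _ _ _ ((b 1 - x 1) / (b 0 - a 0)) ((x 1 - (a 0 + b 1 - b 0)) / (b 0 - a 0))
          (div_nonneg (by linarith) (by linarith)) (div_nonneg (by linarith) (by linarith))
          (by field_simp [hd] <;> ring) ?_ ?_) <;>
        simp only [Matrix.cons_val_zero, Matrix.cons_val_one, Matrix.head_cons, hmax] <;>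
        · field_simp [hd] <;> ring
  have hRmem : (![min (c 0) (x 1 - c 1 + c 0), x 1] : Fin 2 → ℝ) ∈ convexHull ℝ V := by
    rcases le_total (c 1) (x 1) with hc | hc
    · have hmin : min (c 0) (x 1 - c 1 + c 0) = c 0 := min_eq_left (by linarith)
      have hd : b 1 - c 1 ≠ 0 := (by linarith : (0:ℝ) < b 1 - c 1).ne'
      refine (convex_convexHull ℝ V).segment_subset mc m4
        (seg2 _ _ _ ((b 1 - x 1) / (b 1 - c 1)) ((x 1 - c 1) / (b 1 - c 1))
          (div_nonneg (by linarith) (by linarith)) (div_nonneg (by linarith) (by linarith))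
          (by field_simp [hd] <;> ring) ?_ ?_) <;>
        simp only [Matrix.cons_val_zero, Matrix.cons_val_one, Matrix.head_cons, hmin] <;>
        · field_simp [hd] <;> ring
    · have hmin : min (c 0) (x 1 - c 1 + c 0) = x 1 - c 1 + c 0 := min_eq_right (by linarith)
      have hd : c 1 - a 1 ≠ 0 := (by linarith : (0:ℝ) < c 1 - a 1).ne'
      refine (convex_convexHull ℝ V).segment_subset m6 mc
        (seg2 _ _ _ ((c 1 - x 1) / (c 1 - a 1)) ((x 1 - a 1) / (c 1 - a 1))
          (div_nonneg (by linarith) (by linarith)) (div_nonneg (by linarith) (by linarith))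
          (by field_simp [hd] <;> ring) ?_ ?_) <;>
        simp only [Matrix.cons_val_zero, Matrix.cons_val_one, Matrix.head_cons, hmin] <;>
        · field_simp [hd] <;> ring
  have hLR : max (a 0) (x 1 - b 1 + b 0) < min (c 0) (x 1 - c 1 + c 0) :=
    max_lt (lt_min (by linarith) (by linarith)) (lt_min (by linarith) (by linarith))
  have hxL : max (a 0) (x 1 - b 1 + b 0) ≤ x 0 := max_le hx1 (by linarith)
  have hxR : x 0 ≤ min (c 0) (x 1 - c 1 + c 0) := le_min hx2 (by linarith)
  have hd : min (c 0) (x 1 - c 1 + c 0) - max (a 0) (x 1 - b 1 + b 0) ≠ 0 :=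
    (by linarith : (0:ℝ) < min (c 0) (x 1 - c 1 + c 0) - max (a 0) (x 1 - b 1 + b 0)).ne'
  refine (convex_convexHull ℝ V).segment_subset hLmem hRmem
    (seg2 _ _ _ ((min (c 0) (x 1 - c 1 + c 0) - x 0) /
        (min (c 0) (x 1 - c 1 + c 0) - max (a 0) (x 1 - b 1 + b 0)))
      ((x 0 - max (a 0) (x 1 - b 1 + b 0)) /
        (min (c 0) (x 1 - c 1 + c 0) - max (a 0) (x 1 - b 1 + b 0)))
      (div_nonneg (by linarith) (by linarith)) (div_nonneg (by linarith) (by linarith))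
      (by field_simp [hd] <;> ring) ?_ ?_) <;>
    simp only [Matrix.cons_val_zero, Matrix.cons_val_one, Matrix.head_cons] <;>
    · field_simp [hd] <;> ring

/-- the tropical span of the vertices of a transversal tropical
triangle is the solid classical hexagon with the six indicated vertices. -/
theorem tropSpan_eq_hexagon (a b c : Fin 2 → ℝ) (h : SixIneqs a b c) :
    {u : Fin 2 → ℝ | TropSpanned (jhat u) ![jhat a, jhat b, jhat c]} =
      convexHull ℝ ({a, ![a 0, a 0 + b 1 - b 0], b, ![c 0, b 1], c,
        ![a 1 + c 0 - c 1, a 1]} : Set (Fin 2 → ℝ)) := by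
  ext x
  simp only [Set.mem_setOf_eq]
  constructor
  · intro hx
    exact hex_subset_hull a b c h x (hex_of_spanned a b c x h hx)
  · intro hx
    exact spanned_of_hex a b c x h (hull_subset_hex a b c h hx)
end

section
/- Let a, b, c ∈ ℝ² satisfy the six inequalities a₁ < b₁ < c₁, a₂ < c₂ < b₂, and b₁−b₂ < a₁−a₂ < c₁−c₂. Then the embedded points ĵ(a), ĵ(b), ĵ(c) ∈ ℝ³ are tropically independent: none of them is tropically spanned by the other two. -/
/-- the vertices of a transversal tropical triangle are
tropically independent. -/
theorem vertices_tropically_independent (a b c : Fin 2 → ℝ) (h : SixIneqs a b c) :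
    ¬ TropSpanned (jhat a) ![jhat b, jhat c] ∧
    ¬ TropSpanned (jhat b) ![jhat a, jhat c] ∧
    ¬ TropSpanned (jhat c) ![jhat a, jhat b] := by
  obtain ⟨h1, h2, h3, h4, h5, h6⟩ := h
  refine ⟨?_, ?_, ?_⟩
  · rintro ⟨S, hS, lam, l, hl⟩
    set p : Fin 2 → Fin 3 → ℝ := ![jhat b, jhat c] with hp
    have hl0 : S.sup' hS (fun j => lam j + p j 0) = jhat a 0 + l := congrFun hl 0
    have hl2 : S.sup' hS (fun j => lam j + p j 2) = jhat a 2 + l := congrFun hl 2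
    obtain ⟨j, hj, hje⟩ := Finset.exists_mem_eq_sup' hS (fun j => lam j + p j 2)
    have e2 : jhat a 2 + l = lam j + p j 2 := by rw [← hl2, hje]
    have e0 : lam j + p j 0 ≤ jhat a 0 + l :=
      hl0 ▸ Finset.le_sup' (fun j => lam j + p j 0) hj
    fin_cases j <;> simp [hp, jhat] at e2 e0 <;> linarith
  · rintro ⟨S, hS, lam, l, hl⟩
    set p : Fin 2 → Fin 3 → ℝ := ![jhat a, jhat c] with hp
    have hl1 : S.sup' hS (fun j => lam j + p j 1) = jhat b 1 + l := congrFun hl 1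
    have hl2 : S.sup' hS (fun j => lam j + p j 2) = jhat b 2 + l := congrFun hl 2
    obtain ⟨j, hj, hje⟩ := Finset.exists_mem_eq_sup' hS (fun j => lam j + p j 1)
    have e1 : jhat b 1 + l = lam j + p j 1 := by rw [← hl1, hje]
    have e2 : lam j + p j 2 ≤ jhat b 2 + l :=
      hl2 ▸ Finset.le_sup' (fun j => lam j + p j 2) hj
    fin_cases j <;> simp [hp, jhat] at e1 e2 <;> linarith
  · rintro ⟨S, hS, lam, l, hl⟩
    set p : Fin 2 → Fin 3 → ℝ := ![jhat a, jhat b] with hp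
    have hl0 : S.sup' hS (fun j => lam j + p j 0) = jhat c 0 + l := congrFun hl 0
    have hl2 : S.sup' hS (fun j => lam j + p j 2) = jhat c 2 + l := congrFun hl 2
    obtain ⟨j, hj, hje⟩ := Finset.exists_mem_eq_sup' hS (fun j => lam j + p j 0)
    have e0 : jhat c 0 + l = lam j + p j 0 := by rw [← hl0, hje]
    have e2 : lam j + p j 2 ≤ jhat c 2 + l :=
      hl2 ▸ Finset.le_sup' (fun j => lam j + p j 2) hj
    fin_cases j <;> simp [hp, jhat] at e0 e2 <;> linarith
end
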